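/- For all natural numbers g, the integer sequence a_g := ∑_{i=0}^{g} C(g,i)·F_{2i−1} (with F_{−1} = 1) satisfies the linear recurrence a_{g+2} = 5·a_{g+1} − 5·a_g. -/

import Mathlib

/-!
Write `T s g = ∑ i ≤ g, C(g,i) s i` for the binomial transform of `s`. Pascal's rule gives
`T s (g+1) = T s g + T (s ∘ succ) g`, so if `s (i+2) = p s (i+1) - q s i` then `T s` satisfies the
recurrence whose characteristic roots are those of `s` shifted by `1`:
`T s (g+2) = (p+2) T s (g+1) - (1+p+q) T s g`.
With `F_{2i-1} = F_{2i+1} - F_{2i}` (which also covers `F_{-1} = 1`), the sequence `s i = F_{2i-1}`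
satisfies `s (i+2) = 3 s (i+1) - s i`, giving `x² - 5x + 5`.
-/

/-- Fibonacci numbers extended to integer index `-1` by `F_{-1} = 1`
(only indices `≥ -1` are used). -/
def fibZ (k : ℤ) : ℤ :=
  if k = -1 then 1 else Nat.fib k.toNat

/-- `a g = ∑_{i=0}^{g} C(g,i) · F_{2i-1}` with `F_{-1} = 1`. -/
def a (g : ℕ) : ℤ :=
  ∑ i ∈ Finset.range (g + 1), (g.choose i : ℤ) * fibZ (2 * i - 1)

section BinomialTransform

variable {R : Type*} [CommRing R]

def binomialTransform (s : ℕ → R) (n : ℕ) : R :=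
  ∑ i ∈ Finset.range (n + 1), (n.choose i : R) * s i

theorem binomialTransform_succ (s : ℕ → R) (n : ℕ) :
    binomialTransform s (n + 1) = binomialTransform s n + binomialTransform (fun i ↦ s (i + 1)) n :=
  Finset.sum_choose_succ_mul (fun i _ ↦ s i) n

theorem binomialTransform_add_two {s : ℕ → R} {p q : R}
    (hs : ∀ i, s (i + 2) = p * s (i + 1) - q * s i) (n : ℕ) :
    binomialTransform s (n + 2) =
      (p + 2) * binomialTransform s (n + 1) - (1 + p + q) * binomialTransform s n := by
  have hshift₂ : binomialTransform (fun i ↦ s (i + 2)) n =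
      p * binomialTransform (fun i ↦ s (i + 1)) n - q * binomialTransform s n := by
    simp only [binomialTransform, hs, Finset.mul_sum, ← Finset.sum_sub_distrib]
    exact Finset.sum_congr rfl fun _ _ ↦ by ring
  have h₀ := binomialTransform_succ s n
  have h₁ := binomialTransform_succ s (n + 1)
  have h₂ := binomialTransform_succ (fun i ↦ s (i + 1)) n
  linear_combination h₁ + h₂ + hshift₂ - (p + 1) * h₀

end BinomialTransform

theorem fibZ_two_mul_sub_one (i : ℕ) :
    fibZ (2 * i - 1) = (Nat.fib (2 * i + 1) : ℤ) - Nat.fib (2 * i) := by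
  rcases i with _ | j
  · simp [fibZ]
  · have hidx : 2 * ((j + 1 : ℕ) : ℤ) - 1 = ((2 * j + 1 : ℕ) : ℤ) := by push_cast; ring
    rw [fibZ, hidx, if_neg (by omega), Int.toNat_natCast]
    simp only [mul_add, Nat.fib_add_two, Nat.cast_add]
    ring

theorem a_eq_binomialTransform (g : ℕ) :
    a g = binomialTransform (fun i ↦ (Nat.fib (2 * i + 1) : ℤ) - Nat.fib (2 * i)) g := by
  simp only [a, binomialTransform, fibZ_two_mul_sub_one]

theorem fib_two_mul_add_one_sub_fib_two_mul_add_two (i : ℕ) :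
    (Nat.fib (2 * (i + 2) + 1) : ℤ) - Nat.fib (2 * (i + 2)) =
      3 * ((Nat.fib (2 * (i + 1) + 1) : ℤ) - Nat.fib (2 * (i + 1))) -
        1 * ((Nat.fib (2 * i + 1) : ℤ) - Nat.fib (2 * i)) := by
  simp only [mul_add, Nat.fib_add_two, Nat.cast_add]
  ring

theorem stmt_12 (g : ℕ) : a (g + 2) = 5 * a (g + 1) - 5 * a g := by
  rw [a_eq_binomialTransform, a_eq_binomialTransform, a_eq_binomialTransform,
    binomialTransform_add_two (p := 3) (q := 1) fib_two_mul_add_one_sub_fib_two_mul_add_two]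
  ring
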